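/- Let [n] = I ∪ J be a partition into disjoint sets and W ⊆ ℝⁿ a linear subspace. Then π_J(W⊥) ∩ π_J(W) = im(ℓ_I^W), i.e., the set {(L_I^W(x))_J : x ∈ ℝ^I} equals the intersection of the subspaces π_J(W⊥) and π_J(W) of ℝ^J. -/

import Mathlib

open scoped RealInnerProductSpace

/-- The coordinate projection `π_I : ℝⁿ → ℝ^I` as a linear map. -/
noncomputable def coordRestrict {n : ℕ} (I : Finset (Fin n)) :
    EuclideanSpace ℝ (Fin n) →ₗ[ℝ] EuclideanSpace ℝ {i : Fin n // i ∈ I} where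
  toFun x := WithLp.toLp 2 (fun i => x i.1)
  map_add' _ _ := rfl
  map_smul' _ _ := rfl

/-- `L` is the lifting map `L_I^W : ℝ^I → W`: for every `x`, `L x` is the minimum-norm
element of `{w ∈ W : w_I = Π_{π_I(W)}(x)}` (equivalently, of
`{w ∈ W : w_I - x ∈ (π_I(W))ᗮ}`). -/
def IsLiftingMap {n : ℕ} (I : Finset (Fin n)) (W : Submodule ℝ (EuclideanSpace ℝ (Fin n)))
    (L : EuclideanSpace ℝ {i : Fin n // i ∈ I} →ₗ[ℝ] EuclideanSpace ℝ (Fin n)) : Prop :=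
  ∀ x, (L x ∈ W ∧ coordRestrict I (L x) - x ∈ (W.map (coordRestrict I))ᗮ) ∧
    ∀ w ∈ W, coordRestrict I w - x ∈ (W.map (coordRestrict I))ᗮ → ‖L x‖ ≤ ‖w‖

/-!
Write `K = W ∩ ker π_I`. Minimality of `L x` in its fibre `L x + K` forces `L x ⊥ K`, and
since vectors of `K` vanish on `I`, this says `π_J (L x) ⊥ π_J K`. Extension by zero is the
adjoint of `π_J`, which gives the duality `π_J (Wᗮ) = (π_J K)ᗮ`; so `im ℓ_I^W` lies in the
intersection. Conversely, if `π_J w ⊥ π_J K` with `w ∈ W`, then `w - L (π_I w) ∈ K`, so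
`π_J w - ℓ_I^W (π_I w)` lies in both `π_J K` and `(π_J K)ᗮ`, hence vanishes.
-/

section Coordinates

variable {n : ℕ}

theorem coordRestrict_apply (I : Finset (Fin n)) (x : EuclideanSpace ℝ (Fin n))
    (i : {i : Fin n // i ∈ I}) : coordRestrict I x i = x i :=
  rfl

noncomputable def coordExtend (J : Finset (Fin n)) :
    EuclideanSpace ℝ {i : Fin n // i ∈ J} →ₗ[ℝ] EuclideanSpace ℝ (Fin n) where
  toFun y := WithLp.toLp 2 (fun i => if h : i ∈ J then y ⟨i, h⟩ else 0)
  map_add' y z := by ext i; by_cases h : i ∈ J <;> simp [h]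
  map_smul' c y := by ext i; by_cases h : i ∈ J <;> simp [h]

theorem coordExtend_apply (J : Finset (Fin n)) (y : EuclideanSpace ℝ {i : Fin n // i ∈ J})
    (i : Fin n) : coordExtend J y i = if h : i ∈ J then y ⟨i, h⟩ else 0 :=
  rfl

theorem coordRestrict_coordExtend (J : Finset (Fin n))
    (y : EuclideanSpace ℝ {i : Fin n // i ∈ J}) : coordRestrict J (coordExtend J y) = y := by
  ext i
  simp [coordRestrict_apply, coordExtend_apply, i.2]

theorem coordRestrict_coordExtend_of_disjoint {I J : Finset (Fin n)} (hdisj : Disjoint I J)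
    (y : EuclideanSpace ℝ {i : Fin n // i ∈ J}) : coordRestrict I (coordExtend J y) = 0 := by
  ext i
  simp [coordRestrict_apply, coordExtend_apply, Finset.disjoint_left.mp hdisj i.2]

theorem coordExtend_coordRestrict_of_coordRestrict_eq_zero {I J : Finset (Fin n)}
    (hIJ : I ∪ J = Finset.univ) {v : EuclideanSpace ℝ (Fin n)} (hv : coordRestrict I v = 0) :
    coordExtend J (coordRestrict J v) = v := by
  ext i
  by_cases hJ : i ∈ J
  · simp [coordRestrict_apply, coordExtend_apply, hJ]
  · have hI : i ∈ I := by simpa [hJ] using hIJ.ge (Finset.mem_univ i)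
    have hvi : v i = 0 := congr($hv ⟨i, hI⟩)
    simp [coordExtend_apply, hJ, hvi]

theorem inner_coordExtend_left (J : Finset (Fin n))
    (y : EuclideanSpace ℝ {i : Fin n // i ∈ J}) (v : EuclideanSpace ℝ (Fin n)) :
    ⟪coordExtend J y, v⟫ = ⟪y, coordRestrict J v⟫ := by
  simp only [PiLp.inner_apply, coordExtend_apply, coordRestrict_apply,
    apply_dite (inner ℝ · (v _)), inner_zero_left]
  rw [Finset.sum_dite, Finset.sum_const_zero, add_zero]
  exact Finset.sum_bij' (fun i _ => ⟨i, by simpa using i.2⟩) (fun i _ => ⟨i, by simp⟩)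
    (by simp) (by simp) (by simp) (by simp) (by simp)

theorem inner_coordRestrict_of_coordRestrict_eq_zero {I J : Finset (Fin n)}
    (hIJ : I ∪ J = Finset.univ) {u : EuclideanSpace ℝ (Fin n)} (hu : coordRestrict I u = 0)
    (v : EuclideanSpace ℝ (Fin n)) : ⟪coordRestrict J u, coordRestrict J v⟫ = ⟪u, v⟫ := by
  conv_rhs => rw [← coordExtend_coordRestrict_of_coordRestrict_eq_zero hIJ hu]
  rw [inner_coordExtend_left]

theorem coordRestrict_mem_orthogonal_map {I J : Finset (Fin n)} (hIJ : I ∪ J = Finset.univ)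
    {K : Submodule ℝ (EuclideanSpace ℝ (Fin n))} (hK : K ≤ LinearMap.ker (coordRestrict I))
    {u : EuclideanSpace ℝ (Fin n)} (hu : u ∈ Kᗮ) :
    coordRestrict J u ∈ (K.map (coordRestrict J))ᗮ := by
  rintro _ ⟨v, hv, rfl⟩
  rw [inner_coordRestrict_of_coordRestrict_eq_zero hIJ (hK hv)]
  exact hu v hv

theorem orthogonal_map_coordRestrict {I J : Finset (Fin n)} (hIJ : I ∪ J = Finset.univ)
    (hdisj : Disjoint I J) (V : Submodule ℝ (EuclideanSpace ℝ (Fin n))) :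
    (V.map (coordRestrict J))ᗮ =
      (Vᗮ ⊓ LinearMap.ker (coordRestrict I)).map (coordRestrict J) := by
  refine le_antisymm (fun y hy => ?_) ?_
  · refine ⟨coordExtend J y, ⟨fun v hv => ?_, coordRestrict_coordExtend_of_disjoint hdisj y⟩,
      coordRestrict_coordExtend J y⟩
    rw [real_inner_comm, inner_coordExtend_left, real_inner_comm]
    exact hy _ ⟨v, hv, rfl⟩
  · rintro _ ⟨u, ⟨huV, huI⟩, rfl⟩ _ ⟨v, hv, rfl⟩
    rw [real_inner_comm, inner_coordRestrict_of_coordRestrict_eq_zero hIJ huI, real_inner_comm]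
    exact huV v hv

theorem map_coordRestrict_orthogonal {I J : Finset (Fin n)} (hIJ : I ∪ J = Finset.univ)
    (hdisj : Disjoint I J) (W : Submodule ℝ (EuclideanSpace ℝ (Fin n))) :
    Wᗮ.map (coordRestrict J) =
      ((W ⊓ LinearMap.ker (coordRestrict I)).map (coordRestrict J))ᗮ := by
  rw [← Submodule.orthogonal_orthogonal W, ← orthogonal_map_coordRestrict hIJ hdisj,
    Submodule.orthogonal_orthogonal, Submodule.orthogonal_orthogonal]

end Coordinates

namespace Submodule

variable {𝕜 E : Type*} [RCLike 𝕜] [NormedAddCommGroup E] [InnerProductSpace 𝕜 E]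

theorem eq_zero_of_mem_of_mem_orthogonal {K : Submodule 𝕜 E} {v : E} (hvK : v ∈ K)
    (hvK' : v ∈ Kᗮ) : v = 0 :=
  disjoint_def.mp K.orthogonal_disjoint v hvK hvK'

theorem mem_orthogonal_of_forall_norm_le_norm_add (K : Submodule 𝕜 E) [K.HasOrthogonalProjection]
    {v : E} (hv : ∀ k ∈ K, ‖v‖ ≤ ‖v + k‖) : v ∈ Kᗮ := by
  have hle : ‖v‖ ≤ ‖Kᗮ.starProjection v‖ := by
    simpa [K.starProjection_orthogonal_val, sub_eq_add_neg] using
      hv _ (K.neg_mem (K.starProjection_apply_mem v))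
  have hpyth := K.norm_sq_eq_add_norm_sq_starProjection v
  have hzero : ‖K.starProjection v‖ = 0 := by
    nlinarith [norm_nonneg v, norm_nonneg (K.starProjection v)]
  exact K.starProjection_apply_eq_zero_iff.mp (norm_eq_zero.mp hzero)

end Submodule

namespace IsLiftingMap

variable {n : ℕ} {I : Finset (Fin n)} {W : Submodule ℝ (EuclideanSpace ℝ (Fin n))}
  {L : EuclideanSpace ℝ {i : Fin n // i ∈ I} →ₗ[ℝ] EuclideanSpace ℝ (Fin n)}

theorem mem_orthogonal (hL : IsLiftingMap I W L) (x : EuclideanSpace ℝ {i : Fin n // i ∈ I}) :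
    L x ∈ (W ⊓ LinearMap.ker (coordRestrict I))ᗮ := by
  refine Submodule.mem_orthogonal_of_forall_norm_le_norm_add _ fun k ⟨hkW, hkI⟩ => ?_
  refine (hL x).2 _ (W.add_mem (hL x).1.1 hkW) ?_
  simpa [LinearMap.mem_ker.mp hkI] using (hL x).1.2

theorem coordRestrict_apply_coordRestrict (hL : IsLiftingMap I W L)
    {w : EuclideanSpace ℝ (Fin n)} (hw : w ∈ W) :
    coordRestrict I (L (coordRestrict I w)) = coordRestrict I w :=
  sub_eq_zero.mp <| Submodule.eq_zero_of_mem_of_mem_orthogonal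
    (Submodule.sub_mem _ (Submodule.mem_map_of_mem (hL _).1.1) (Submodule.mem_map_of_mem hw))
    (hL _).1.2

end IsLiftingMap

theorem statement8 (n : ℕ) (I J : Finset (Fin n))
    (hIJ : I ∪ J = Finset.univ) (hdisj : Disjoint I J)
    (W : Submodule ℝ (EuclideanSpace ℝ (Fin n)))
    (L : EuclideanSpace ℝ {i : Fin n // i ∈ I} →ₗ[ℝ] EuclideanSpace ℝ (Fin n))
    (hL : IsLiftingMap I W L) :
    Wᗮ.map (coordRestrict J) ⊓ W.map (coordRestrict J) =
      LinearMap.range ((coordRestrict J).comp L) := by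
  rw [map_coordRestrict_orthogonal hIJ hdisj W]
  set K := W ⊓ LinearMap.ker (coordRestrict I)
  have hLK : ∀ x, coordRestrict J (L x) ∈ (K.map (coordRestrict J))ᗮ := fun x =>
    coordRestrict_mem_orthogonal_map hIJ inf_le_right (hL.mem_orthogonal x)
  refine le_antisymm ?_ ?_
  · rintro _ ⟨hwK, w, hw, rfl⟩
    refine ⟨coordRestrict I w, Eq.symm <| sub_eq_zero.mp ?_⟩
    have hdiff : w - L (coordRestrict I w) ∈ K :=
      ⟨W.sub_mem hw (hL _).1.1, by simp [hL.coordRestrict_apply_coordRestrict hw]⟩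
    refine Submodule.eq_zero_of_mem_of_mem_orthogonal ?_ (Submodule.sub_mem _ hwK (hLK _))
    simpa only [map_sub, LinearMap.comp_apply] using
      Submodule.mem_map_of_mem (f := coordRestrict J) hdiff
  · rintro _ ⟨x, rfl⟩
    exact ⟨hLK x, L x, (hL x).1.1, rfl⟩
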